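/- Let q_k and μ_k be the coefficient sequences of F₁(t;x) = exp(-4t³/3+tx) and F₂(t;x) = exp(-t³/3+tx) (with q_k ≡ 0 for k < 0). Then for all k ≥ 0: 2^{k-1} μ_k(x) - δ_{k0}/2 = ∑_{m=0}^{k} q_{k-2m-1}(x) q_{2m+1}(x). -/

import Mathlib

open Complex

/-- `q_k(x)`: the `k`-th Taylor coefficient in `t` of `F₁(t;x) = exp(-4t³/3 + t·x)`. -/
noncomputable def qpoly (k : ℕ) (x : ℂ) : ℂ :=
  iteratedDeriv k (fun t : ℂ => Complex.exp (-4 * t ^ 3 / 3 + t * x)) 0 / (Nat.factorial k)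

/-- `q_k` extended to integer indices by `q_k ≡ 0` for `k < 0`. -/
noncomputable def qz (k : ℤ) (x : ℂ) : ℂ := if 0 ≤ k then qpoly k.toNat x else 0

/-- `μ_k(x)`: the `k`-th Taylor coefficient in `t` of `F₂(t;x) = exp(-t³/3 + t·x)`. -/
noncomputable def mu (k : ℕ) (x : ℂ) : ℂ :=
  iteratedDeriv k (fun t : ℂ => Complex.exp (-t ^ 3 / 3 + t * x)) 0 / (Nat.factorial k)

/-!
The odd part of the Cauchy square `∑ⱼ q_j q_{k-j}` is half the difference between the
coefficients of `F₁(t)²` and of `F₁(-t) F₁(t)`. Now `F₁(t)² = exp(-8t³/3 + 2tx) = F₂(2t)`,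
whose coefficients are `2ᵏ μ_k`, while `F₁(-t) F₁(t) = 1`. Both products are
expanded by the Leibniz rule for iterated derivatives.
-/

open Finset

section TaylorCoeff

variable {𝕜 : Type*} [NontriviallyNormedField 𝕜]

noncomputable def taylorCoeff (f : 𝕜 → 𝕜) (n : ℕ) : 𝕜 :=
  iteratedDeriv n f 0 / n.factorial

theorem taylorCoeff_mul [CharZero 𝕜] {f g : 𝕜 → 𝕜} {n : ℕ} (hf : ContDiffAt 𝕜 n f 0)
    (hg : ContDiffAt 𝕜 n g 0) :
    taylorCoeff (f * g) n = ∑ i ∈ range (n + 1), taylorCoeff f i * taylorCoeff g (n - i) := by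
  rw [taylorCoeff, iteratedDeriv_mul hf hg, sum_div]
  refine sum_congr rfl fun i hi => ?_
  rw [taylorCoeff, taylorCoeff, Nat.cast_choose 𝕜 (Nat.lt_succ_iff.mp (mem_range.mp hi))]
  have hfac : (n.factorial : 𝕜) ≠ 0 := Nat.cast_ne_zero.mpr n.factorial_ne_zero
  field_simp

theorem taylorCoeff_comp_const_mul {f : 𝕜 → 𝕜} {n : ℕ} (hf : ContDiff 𝕜 n f) (c : 𝕜) :
    taylorCoeff (fun x => f (c * x)) n = c ^ n * taylorCoeff f n := by
  simp only [taylorCoeff, iteratedDeriv_comp_const_mul hf, mul_zero, mul_div_assoc]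

theorem taylorCoeff_comp_neg (f : 𝕜 → 𝕜) (n : ℕ) :
    taylorCoeff (fun x => f (-x)) n = (-1) ^ n * taylorCoeff f n := by
  rw [taylorCoeff, iteratedDeriv_comp_neg, neg_zero, smul_eq_mul, mul_div_assoc, taylorCoeff]

theorem taylorCoeff_one (n : ℕ) : taylorCoeff (1 : 𝕜 → 𝕜) n = if n = 0 then 1 else 0 := by
  rw [taylorCoeff, Pi.one_def, iteratedDeriv_const]
  split_ifs with hn <;> simp [hn]

end TaylorCoeff

theorem qpoly_eq_taylorCoeff (k : ℕ) (x : ℂ) :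
    qpoly k x = taylorCoeff (fun t => exp (-4 * t ^ 3 / 3 + t * x)) k := rfl

theorem mu_eq_taylorCoeff (k : ℕ) (x : ℂ) :
    mu k x = taylorCoeff (fun t => exp (-t ^ 3 / 3 + t * x)) k := rfl

theorem sum_qpoly_mul_qpoly (x : ℂ) (n : ℕ) :
    ∑ j ∈ range (n + 1), qpoly j x * qpoly (n - j) x = 2 ^ n * mu n x := by
  have hsq : (fun t : ℂ => exp (-4 * t ^ 3 / 3 + t * x)) * (fun t => exp (-4 * t ^ 3 / 3 + t * x))
      = fun t => exp (-(2 * t) ^ 3 / 3 + 2 * t * x) := by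
    funext t
    rw [Pi.mul_apply, ← exp_add]
    ring_nf
  simp only [qpoly_eq_taylorCoeff, mu_eq_taylorCoeff]
  rw [← taylorCoeff_mul (by fun_prop) (by fun_prop), hsq,
    taylorCoeff_comp_const_mul (f := fun s => exp (-s ^ 3 / 3 + s * x)) (by fun_prop)]

theorem sum_neg_one_pow_mul_qpoly_mul_qpoly (x : ℂ) (n : ℕ) :
    ∑ j ∈ range (n + 1), (-1) ^ j * (qpoly j x * qpoly (n - j) x) = if n = 0 then 1 else 0 := by
  have hinv : (fun t : ℂ => exp (-4 * (-t) ^ 3 / 3 + -t * x)) *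
      (fun t => exp (-4 * t ^ 3 / 3 + t * x)) = 1 := by
    funext t
    rw [Pi.mul_apply, ← exp_add, Pi.one_apply, ← exp_zero]
    ring_nf
  simp only [qpoly_eq_taylorCoeff, ← mul_assoc,
    ← taylorCoeff_comp_neg (fun t => exp (-4 * t ^ 3 / 3 + t * x))]
  rw [← taylorCoeff_mul (by fun_prop) (by fun_prop), hinv, taylorCoeff_one]

theorem qz_natCast_sub (k j : ℕ) (x : ℂ) :
    qz ((k : ℤ) - j) x = if j ≤ k then qpoly (k - j) x else 0 := by
  by_cases hj : j ≤ k
  · rw [qz, if_pos (by omega), if_pos hj, show ((k : ℤ) - j).toNat = k - j by omega]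
  · rw [qz, if_neg (by omega), if_neg hj]

theorem sum_range_succ_ite_two_mul_add_one {M : Type*} [AddCommMonoid M] (f : ℕ → M) (k : ℕ) :
    ∑ m ∈ range (k + 1), (if 2 * m + 1 ≤ k then f (2 * m + 1) else 0) =
      ∑ j ∈ range (k + 1), if Odd j then f j else 0 := by
  rw [← sum_filter, ← sum_filter]
  refine sum_nbij' (fun m => 2 * m + 1) (fun j => j / 2) ?_ ?_ ?_ ?_ fun _ _ => rfl
  · intro m hm
    rw [mem_filter, mem_range] at hm ⊢
    exact ⟨by omega, odd_two_mul_add_one m⟩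
  · intro j hj
    rw [mem_filter, mem_range] at hj ⊢
    obtain ⟨hjk, r, rfl⟩ := hj
    omega
  · intro m _
    omega
  · intro j hj
    obtain ⟨r, rfl⟩ := (mem_filter.mp hj).2
    omega

theorem two_mul_sum_ite_odd {R : Type*} [CommRing R] (s : Finset ℕ) (g : ℕ → R) :
    2 * ∑ j ∈ s, (if Odd j then g j else 0) = ∑ j ∈ s, g j - ∑ j ∈ s, (-1) ^ j * g j := by
  rw [mul_sum, ← sum_sub_distrib]
  refine sum_congr rfl fun j _ => ?_
  rcases j.even_or_odd with hj | hj
  · rw [if_neg (Nat.not_odd_iff_even.mpr hj), hj.neg_one_pow]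
    ring
  · rw [if_pos hj, hj.neg_one_pow]
    ring

theorem q_mu_odd_convolution (k : ℕ) (x : ℂ) :
    (2 : ℂ) ^ ((k : ℤ) - 1) * mu k x - (if k = 0 then (1 : ℂ) else 0) / 2 =
      ∑ m ∈ Finset.range (k + 1), qz ((k : ℤ) - 2 * m - 1) x * qpoly (2 * m + 1) x := by
  have hodd : ∑ m ∈ range (k + 1), qz ((k : ℤ) - 2 * m - 1) x * qpoly (2 * m + 1) x =
      ∑ j ∈ range (k + 1), if Odd j then qpoly j x * qpoly (k - j) x else 0 := by
    rw [← sum_range_succ_ite_two_mul_add_one]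
    refine sum_congr rfl fun m _ => ?_
    rw [show (k : ℤ) - 2 * m - 1 = k - (2 * m + 1 : ℕ) by push_cast; ring, qz_natCast_sub]
    split_ifs <;> ring
  have htwice := two_mul_sum_ite_odd (range (k + 1)) fun j => qpoly j x * qpoly (k - j) x
  rw [sum_qpoly_mul_qpoly, sum_neg_one_pow_mul_qpoly_mul_qpoly] at htwice
  rw [hodd, zpow_sub₀ two_ne_zero, zpow_natCast, zpow_one]
  linear_combination (-1 / 2 : ℂ) * htwice
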